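/- Let A be an n×n matrix with nonnegative real entries such that a_{ij} ≤ 1 for all i,j, μ(A) = 1, and a_{ij} = 1 for every critical edge (i,j) (i.e., A is visualized). Suppose i and i′ lie in the same strongly connected component of the critical graph D^C(A), and j and j′ lie in the same strongly connected component of D^C(A). Then a*_{ij} = a*_{i′j′}, where A* is the Kleene star of A. -/
import Mathlib


open scoped Classical

/-- `T` is an `i`-tree in the digraph on vertex set `V` with edge relation `R`:
every node `j ≠ i` has exactly one outgoing edge in `T`, node `i` has no
outgoing edge in `T`, all edges of `T` are edges of the digraph, and `T`
contains no directed cycle. -/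
def IsITree {V : Type*} (R : V → V → Prop) (i : V) (T : Finset (V × V)) : Prop :=
  (∀ e ∈ T, R e.1 e.2) ∧
  (∀ j : V, j ≠ i → ∃! k : V, (j, k) ∈ T) ∧
  (∀ k : V, (i, k) ∉ T) ∧
  (∀ j : V, ¬ Relation.TransGen (fun a b => (a, b) ∈ T) j j)

/-- Edge relation of the weighted digraph `D(A)`: there is an edge `(a, b)` iff `A a b > 0`. -/
def edgeRel {n : ℕ} (A : Matrix (Fin n) (Fin n) ℝ) : Fin n → Fin n → Prop :=
  fun a b => 0 < A a b

/-- `A` is irreducible: for all `i ≠ j` there is a directed path from `i` to `j` in `D(A)`. -/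
def IrreducibleMat {n : ℕ} (A : Matrix (Fin n) (Fin n) ℝ) : Prop :=
  ∀ i j : Fin n, i ≠ j → Relation.TransGen (edgeRel A) i j

/-- The weight `π(T, A)` of a set `T` of edges: the product of the corresponding entries of `A`. -/
noncomputable def treeWeight {n : ℕ} (A : Matrix (Fin n) (Fin n) ℝ)
    (T : Finset (Fin n × Fin n)) : ℝ :=
  ∏ e ∈ T, A e.1 e.2

/-- The finset `𝒯ᵢ` of all `i`-trees of `D(A)`. -/
noncomputable def iTrees {n : ℕ} (A : Matrix (Fin n) (Fin n) ℝ) (i : Fin n) :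
    Finset (Finset (Fin n × Fin n)) :=
  Finset.univ.filter (IsITree (edgeRel A) i)

/-- `A` is max-stochastic: every row has maximum entry `1`. -/
def MaxStochastic {n : ℕ} (A : Matrix (Fin n) (Fin n) ℝ) : Prop :=
  ∀ i, IsGreatest (Set.range (A i)) 1

/-- `w` is the maximal RST vector of `A`: `w i` is the maximum of the weights of
the `i`-trees of `D(A)`. -/
def IsMaxRSTVector {n : ℕ} (A : Matrix (Fin n) (Fin n) ℝ) (w : Fin n → ℝ) : Prop :=
  ∀ i, IsGreatest {x | ∃ T, IsITree (edgeRel A) i T ∧ x = treeWeight A T} (w i)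

/-- The edges of the closed walk determined by the list of vertices `c`
(consecutive edges together with the wrap-around edge). -/
def cycleEdges {n : ℕ} (c : List (Fin n)) : List (Fin n × Fin n) :=
  c.zip (c.rotate 1)

/-- `c` is a directed cycle in `D(A)`. -/
def IsCycleIn {n : ℕ} (A : Matrix (Fin n) (Fin n) ℝ) (c : List (Fin n)) : Prop :=
  c ≠ [] ∧ ∀ e ∈ cycleEdges c, 0 < A e.1 e.2

/-- The geometric mean of the edge weights of the cycle `c`: the `k`-th root of
the product of the weights, where `k` is the length of the cycle. -/
noncomputable def cycleGeoMean {n : ℕ} (A : Matrix (Fin n) (Fin n) ℝ)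
    (c : List (Fin n)) : ℝ :=
  (((cycleEdges c).map fun e => A e.1 e.2).prod) ^ ((c.length : ℝ)⁻¹)

/-- `i` is a critical node of `A` (with `μ(A) = 1`): `i` lies on a cycle whose
geometric mean is `1 = μ(A)`. -/
def CriticalNode {n : ℕ} (A : Matrix (Fin n) (Fin n) ℝ) (i : Fin n) : Prop :=
  ∃ c, IsCycleIn A c ∧ cycleGeoMean A c = 1 ∧ i ∈ c

/-- `(a, b)` is a critical edge of `A` (with `μ(A) = 1`): it lies on a cycle whose
geometric mean is `1 = μ(A)`. -/
def CriticalEdge {n : ℕ} (A : Matrix (Fin n) (Fin n) ℝ) (a b : Fin n) : Prop :=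
  ∃ c, IsCycleIn A c ∧ cycleGeoMean A c = 1 ∧ (a, b) ∈ cycleEdges c

/-- `i` and `j` lie in the same strongly connected component of the critical
graph `D^C(A)`. -/
def SameCritComponent {n : ℕ} (A : Matrix (Fin n) (Fin n) ℝ) (i j : Fin n) : Prop :=
  Relation.ReflTransGen (CriticalEdge A) i j ∧ Relation.ReflTransGen (CriticalEdge A) j i

/-- The consecutive edges of the walk determined by the list of vertices `P`. -/
def pathEdges {n : ℕ} (P : List (Fin n)) : List (Fin n × Fin n) :=
  P.zip P.tail

/-- The weight of a path: the product of its edge weights. -/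
noncomputable def pathWeight {n : ℕ} (A : Matrix (Fin n) (Fin n) ℝ)
    (P : List (Fin n)) : ℝ :=
  ((pathEdges P).map fun e => A e.1 e.2).prod

/-- `P` is a directed path in `D(A)` from `i` to `j`. -/
def IsPathIn {n : ℕ} (A : Matrix (Fin n) (Fin n) ℝ) (i j : Fin n)
    (P : List (Fin n)) : Prop :=
  P.head? = some i ∧ P.getLast? = some j ∧ 2 ≤ P.length ∧
  ∀ e ∈ pathEdges P, 0 < A e.1 e.2

/-- `S` is the Kleene star `A*` of `A`: `S i i = 1`, and for `i ≠ j`, `S i j` is the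
maximum weight of a directed path from `i` to `j` in `D(A)` (and `0` if there is none). -/
def IsKleeneStar {n : ℕ} (A S : Matrix (Fin n) (Fin n) ℝ) : Prop :=
  (∀ i, S i i = 1) ∧
  ∀ i j, i ≠ j →
    S i j = sSup (insert (0 : ℝ) {x | ∃ P, IsPathIn A i j P ∧ x = pathWeight A P})

/-- `A` is `p`-stochastic: `∑ⱼ aᵢⱼᵖ = 1` for every row `i`. -/
def PStochastic {n : ℕ} (A : Matrix (Fin n) (Fin n) ℝ) (p : ℕ) : Prop :=
  ∀ i, ∑ j, A i j ^ p = 1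

section Aux

variable {n : ℕ} (A : Matrix (Fin n) (Fin n) ℝ)

lemma list_prod_le_one' {l : List ℝ} (h : ∀ x ∈ l, 0 ≤ x ∧ x ≤ 1) : l.prod ≤ 1 := by
  induction l with
  | nil => simp
  | cons a t ih =>
    simp only [List.prod_cons]
    have ha := h a (by simp)
    have ht := ih (fun x hx => h x (by simp [hx]))
    have h0 : 0 ≤ t.prod := List.prod_nonneg fun x hx => (h x (by simp [hx])).1
    calc a * t.prod ≤ 1 * 1 := mul_le_mul ha.2 ht h0 zero_le_one
      _ = 1 := one_mul 1

lemma pathWeight_nonneg' (hnn : ∀ i j, 0 ≤ A i j) (P : List (Fin n)) :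
    0 ≤ pathWeight A P := by
  apply List.prod_nonneg
  intro x hx
  simp only [List.mem_map] at hx
  obtain ⟨e, _, rfl⟩ := hx
  exact hnn _ _

lemma pathWeight_le_one' (hnn : ∀ i j, 0 ≤ A i j) (hle : ∀ i j, A i j ≤ 1)
    (P : List (Fin n)) : pathWeight A P ≤ 1 := by
  apply list_prod_le_one'
  intro x hx
  simp only [List.mem_map] at hx
  obtain ⟨e, _, rfl⟩ := hx
  exact ⟨hnn _ _, hle _ _⟩

lemma pathEdges_cons_cons' (a c : Fin n) (P : List (Fin n)) :
    pathEdges (a :: c :: P) = (a, c) :: pathEdges (c :: P) := rfl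

lemma pathEdges_append' (P : List (Fin n)) (b c : Fin n) (h : P.getLast? = some b) :
    pathEdges (P ++ [c]) = pathEdges P ++ [(b, c)] := by
  induction P with
  | nil => simp at h
  | cons x t ih =>
    cases t with
    | nil =>
      simp only [List.getLast?_singleton, Option.some.injEq] at h
      subst h; rfl
    | cons y s =>
      have h' : (y :: s).getLast? = some b := by
        rw [List.getLast?_cons_cons] at h; exact h
      show (x, y) :: pathEdges (y :: (s ++ [c])) = ((x, y) :: pathEdges (y :: s)) ++ [(b, c)]
      rw [show y :: (s ++ [c]) = (y :: s) ++ [c] from rfl, ih h']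
      rfl

lemma isPathIn_cons' {a c b : Fin n} {P : List (Fin n)}
    (hP : IsPathIn A c b P) (hac : 0 < A a c) :
    IsPathIn A a b (a :: P) ∧ pathWeight A (a :: P) = A a c * pathWeight A P := by
  obtain ⟨h1, h2, h3, h4⟩ := hP
  cases P with
  | nil => simp at h1
  | cons c' P' =>
    have : c' = c := by simpa using h1
    subst this
    refine ⟨⟨rfl, ?_, ?_, ?_⟩, ?_⟩
    · rw [List.getLast?_cons_cons]; exact h2
    · simp only [List.length_cons]; omega
    · intro e he
      rw [pathEdges_cons_cons'] at he
      rcases List.mem_cons.mp he with rfl | he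
      · exact hac
      · exact h4 e he
    · simp [pathWeight, pathEdges_cons_cons']

lemma isPathIn_append' {a b c : Fin n} {P : List (Fin n)}
    (hP : IsPathIn A a b P) (hbc : 0 < A b c) :
    IsPathIn A a c (P ++ [c]) ∧ pathWeight A (P ++ [c]) = pathWeight A P * A b c := by
  obtain ⟨h1, h2, h3, h4⟩ := hP
  have hE := pathEdges_append' P b c h2
  cases P with
  | nil => simp at h1
  | cons x t =>
    refine ⟨⟨by simpa using h1, ?_, ?_, ?_⟩, ?_⟩
    · rw [List.getLast?_concat]
    · simp only [List.length_append, List.length_cons]; omega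
    · intro e he
      rw [hE] at he
      rcases List.mem_append.mp he with he | he
      · exact h4 e he
      · rcases List.mem_singleton.mp he with rfl; exact hbc
    · simp only [pathWeight]
      rw [hE]
      simp

lemma isPathIn_pair' {a b : Fin n} (hab : 0 < A a b) :
    IsPathIn A a b [a, b] ∧ pathWeight A [a, b] = A a b := by
  refine ⟨⟨rfl, rfl, by norm_num, ?_⟩, ?_⟩
  · intro e he
    rcases List.mem_singleton.mp he with rfl; exact hab
  · simp [pathWeight, pathEdges]

end Aux


/-- let `A` be nonnegative with all entries `≤ 1`, `μ(A) = 1`, and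
`a_{ij} = 1` on every critical edge (`A` is visualized). If `i, i′` lie in the same
strongly connected component of the critical graph `D^C(A)` and so do `j, j′`, then
`a*_{ij} = a*_{i′j′}`. -/
theorem stmt_11 {n : ℕ} (A : Matrix (Fin n) (Fin n) ℝ)
    (hnn : ∀ i j, 0 ≤ A i j) (hle : ∀ i j, A i j ≤ 1)
    (hmu : IsGreatest {x | ∃ c, IsCycleIn A c ∧ x = cycleGeoMean A c} 1)
    (hvis : ∀ a b, CriticalEdge A a b → A a b = 1)
    (S : Matrix (Fin n) (Fin n) ℝ) (hS : IsKleeneStar A S)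
    (i i' j j' : Fin n)
    (hi : CriticalNode A i) (hi' : CriticalNode A i')
    (hsamei : SameCritComponent A i i')
    (hj : CriticalNode A j) (hj' : CriticalNode A j')
    (hsamej : SameCritComponent A j j') :
    S i j = S i' j' := by

  classical
  -- Basic facts about S
  have bdd : ∀ a b : Fin n, (1:ℝ) ∈ upperBounds
      (insert (0:ℝ) {x | ∃ P, IsPathIn A a b P ∧ x = pathWeight A P}) := by
    rintro a b x (rfl | ⟨P, hP, rfl⟩)
    · exact zero_le_one
    · exact pathWeight_le_one' A hnn hle P
  have bdd' : ∀ a b : Fin n, BddAbove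
      (insert (0:ℝ) {x | ∃ P, IsPathIn A a b P ∧ x = pathWeight A P}) :=
    fun a b => ⟨1, bdd a b⟩
  have S_nonneg : ∀ a b : Fin n, 0 ≤ S a b := by
    intro a b
    by_cases hab : a = b
    · subst hab; rw [hS.1]; exact zero_le_one
    · rw [hS.2 a b hab]
      exact le_csSup (bdd' a b) (Set.mem_insert 0 _)
  have ge_of_path : ∀ a b : Fin n, a ≠ b → ∀ P, IsPathIn A a b P →
      pathWeight A P ≤ S a b := by
    intro a b hab P hP
    rw [hS.2 a b hab]
    exact le_csSup (bdd' a b) (Set.mem_insert_of_mem _ ⟨P, hP, rfl⟩)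
  have le_S : ∀ a b : Fin n, a ≠ b → ∀ y : ℝ, 0 ≤ y →
      (∀ P, IsPathIn A a b P → pathWeight A P ≤ y) → S a b ≤ y := by
    intro a b hab y hy hub
    rw [hS.2 a b hab]
    apply csSup_le ⟨0, Set.mem_insert 0 _⟩
    rintro x (rfl | ⟨P, hP, rfl⟩)
    · exact hy
    · exact hub P hP
  -- Single-edge lemmas
  have prepend : ∀ a c : Fin n, CriticalEdge A a c → ∀ b, S c b ≤ S a b := by
    intro a c hcrit b
    have h1 : A a c = 1 := hvis a c hcrit
    have hpos : 0 < A a c := by rw [h1]; exact one_pos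
    by_cases hac : a = c
    · subst hac; exact le_refl _
    · by_cases hcb : c = b
      · subst hcb
        rw [hS.1]
        have hab : a ≠ c := hac
        obtain ⟨hP, hw⟩ := isPathIn_pair' A hpos
        calc (1:ℝ) = pathWeight A [a, c] := by rw [hw, h1]
          _ ≤ S a c := ge_of_path a c hab _ hP
      · apply le_S c b hcb _ (S_nonneg a b)
        intro P hP
        obtain ⟨hP', hw⟩ := isPathIn_cons' A hP hpos
        by_cases hab : a = b
        · subst hab; rw [hS.1]
          calc pathWeight A P = pathWeight A (a :: P) := by rw [hw, h1, one_mul]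
            _ ≤ 1 := pathWeight_le_one' A hnn hle _
        · calc pathWeight A P = pathWeight A (a :: P) := by rw [hw, h1, one_mul]
            _ ≤ S a b := ge_of_path a b hab _ hP'
  have append : ∀ b c : Fin n, CriticalEdge A b c → ∀ a, S a b ≤ S a c := by
    intro b c hcrit a
    have h1 : A b c = 1 := hvis b c hcrit
    have hpos : 0 < A b c := by rw [h1]; exact one_pos
    by_cases hbc : b = c
    · subst hbc; exact le_refl _
    · by_cases hab : a = b
      · subst hab
        rw [hS.1]
        have hac : a ≠ c := hbc
        obtain ⟨hP, hw⟩ := isPathIn_pair' A hpos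
        calc (1:ℝ) = pathWeight A [a, c] := by rw [hw, h1]
          _ ≤ S a c := ge_of_path a c hac _ hP
      · apply le_S a b hab _ (S_nonneg a c)
        intro P hP
        obtain ⟨hP', hw⟩ := isPathIn_append' A hP hpos
        by_cases hac : a = c
        · rw [← hac, hS.1]
          calc pathWeight A P = pathWeight A (P ++ [c]) := by rw [hw, h1, mul_one]
            _ ≤ 1 := pathWeight_le_one' A hnn hle _
        · calc pathWeight A P = pathWeight A (P ++ [c]) := by rw [hw, h1, mul_one]
            _ ≤ S a c := ge_of_path a c hac _ hP'
  -- Transitive versions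
  have key1 : ∀ a a' : Fin n, Relation.ReflTransGen (CriticalEdge A) a a' →
      ∀ b, S a' b ≤ S a b := by
    intro a a' h b
    induction h with
    | refl => exact le_refl _
    | tail hmn hedge ih =>
      exact le_trans (prepend _ _ hedge b) ih
  have key2 : ∀ b b' : Fin n, Relation.ReflTransGen (CriticalEdge A) b b' →
      ∀ a, S a b ≤ S a b' := by
    intro b b' h a
    induction h with
    | refl => exact le_refl _
    | tail hmn hedge ih =>
      exact le_trans ih (append _ _ hedge a)
  apply le_antisymm
  · calc S i j ≤ S i' j := key1 i' i hsamei.2 j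
      _ ≤ S i' j' := key2 j j' hsamej.1 i'
  · calc S i' j' ≤ S i j' := key1 i i' hsamei.1 j'
      _ ≤ S i j := key2 j' j hsamej.2 i
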